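/- Fix an integer l ≥ 0 and reals g, h. For x ∈ (0, π/2), let ψp(x) = P_l^{(-g-l-3/2, h+l-1/2)}(cos 2x) and ψm(x) = P_l^{(-g-l-1/2, h+l-3/2)}(cos 2x). Then -8l(h-g+l-1)·ψp·ψm + 2(2h+2l-1)·tan x·ψp·ψm' + 2(2g+2l+1)·cot x·ψm·ψp' - 2·ψm'·ψp' = 0 for all x ∈ (0, π/2). -/

import Mathlib

open Finset

/-- Generalized binomial coefficient `C(z, k) = z(z-1)⋯(z-k+1)/k!`. -/
noncomputable def genChoose (z : ℝ) (k : ℕ) : ℝ :=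
  (descPochhammer ℝ k).eval z / (Nat.factorial k)

/-- The Jacobi polynomial
`P_n^{(a,b)}(x) = ∑_{s=0}^n C(n+a, n-s) C(n+b, s) ((x-1)/2)^s ((x+1)/2)^{n-s}`. -/
noncomputable def jacobi (n : ℕ) (a b x : ℝ) : ℝ :=
  ∑ s ∈ range (n + 1),
    genChoose ((n : ℝ) + a) (n - s) * genChoose ((n : ℝ) + b) s *
      ((x - 1) / 2) ^ s * ((x + 1) / 2) ^ (n - s)


/-!
With `y = cos 2x` one has `d/dx = -2 sin 2x · d/dy`, `tan x · sin 2x = 1 - y`,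
`cot x · sin 2x = 1 + y` and `sin² 2x = (1 - y)(1 + y)`, so the claim becomes a polynomial
identity between `P = P_l^{(a,b)}` and `P̃ = P_l^{(a-1,b+1)}` with `a = -g-l-1/2`, `b = h+l-3/2`.
That identity is the product of the contiguous relations
`(1 - y) P' - a P = -(l + a) P̃` and `(1 + y) P̃' + (b + 1) P̃ = (l + b + 1) P`.
The first is checked coefficientwise on the explicit sum, by Pascal's rule and absorption for
generalized binomial coefficients; the second follows from the first through the reflection
`P_n^{(a,b)}(-y) = (-1)^n P_n^{(b,a)}(y)`.
-/

open Real

lemma genChoose_zero (z : ℝ) : genChoose z 0 = 1 := by simp [genChoose]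

lemma succ_mul_genChoose_succ (z : ℝ) (k : ℕ) :
    ((k : ℝ) + 1) * genChoose z (k + 1) = (z - k) * genChoose z k := by
  have hk : (k.factorial : ℝ) ≠ 0 := by positivity
  simp only [genChoose, descPochhammer_succ_right, Polynomial.eval_mul, Polynomial.eval_sub,
    Polynomial.eval_X, Polynomial.eval_natCast, Nat.factorial_succ]
  push_cast
  field_simp

lemma sub_mul_genChoose (z : ℝ) (k : ℕ) :
    (z - k) * genChoose z k = z * genChoose (z - 1) k := by
  have hk : (k.factorial : ℝ) ≠ 0 := by positivity
  have h : (descPochhammer ℝ k).eval z * (z - k) = z * (descPochhammer ℝ k).eval (z - 1) := by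
    simpa [descPochhammer_succ_right, Polynomial.eval_comp] using
      congrArg (Polynomial.eval z) (descPochhammer_succ_left ℝ k)
  simp only [genChoose]
  field_simp
  linear_combination h

lemma genChoose_add_one_succ (z : ℝ) (k : ℕ) :
    genChoose (z + 1) (k + 1) = genChoose z (k + 1) + genChoose z k := by
  have hk : (k : ℝ) + 1 ≠ 0 := by positivity
  have h := sub_mul_genChoose (z + 1) k
  rw [add_sub_cancel_right] at h
  refine mul_left_cancel₀ hk ?_
  linear_combination succ_mul_genChoose_succ (z + 1) k - succ_mul_genChoose_succ z k + h

lemma genChoose_contiguous (z w : ℝ) (p s : ℕ) :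
    (z - p) * genChoose z p * genChoose w (s + 1) + (p + 1) * genChoose z (p + 1) * genChoose w s
      = z * genChoose (z - 1) p * genChoose (w + 1) (s + 1) := by
  linear_combination genChoose w s * succ_mul_genChoose_succ z p
    + (genChoose w (s + 1) + genChoose w s) * sub_mul_genChoose z p
    - z * genChoose (z - 1) p * genChoose_add_one_succ w s

noncomputable def jacobiMonomial (n s : ℕ) (y : ℝ) : ℝ := ((y - 1) / 2) ^ s * ((y + 1) / 2) ^ (n - s)

noncomputable def jacobiCoeff (n : ℕ) (a b : ℝ) (s : ℕ) : ℝ :=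
  genChoose ((n : ℝ) + a) (n - s) * genChoose ((n : ℝ) + b) s

lemma jacobi_eq_sum (n : ℕ) (a b : ℝ) :
    jacobi n a b = fun y ↦ ∑ s ∈ range (n + 1), jacobiCoeff n a b s * jacobiMonomial n s y := by
  funext y
  simp only [jacobi, jacobiCoeff, jacobiMonomial, mul_assoc]

lemma differentiable_jacobiMonomial (n s : ℕ) : Differentiable ℝ (jacobiMonomial n s) := by
  unfold jacobiMonomial
  fun_prop

lemma differentiable_jacobi (n : ℕ) (a b : ℝ) : Differentiable ℝ (jacobi n a b) := by
  rw [jacobi_eq_sum]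
  have := differentiable_jacobiMonomial n
  fun_prop

lemma one_sub_mul_deriv_jacobiMonomial (n s : ℕ) (y : ℝ) :
    (1 - y) * deriv (jacobiMonomial n s) y
      = -(s * jacobiMonomial n s y) - (n - s : ℕ) * jacobiMonomial n (s + 1) y := by
  have hu : HasDerivAt (fun y : ℝ ↦ (y - 1) / 2) (1 / 2) y := by
    simpa using ((hasDerivAt_id y).sub_const 1).div_const 2
  have hv : HasDerivAt (fun y : ℝ ↦ (y + 1) / 2) (1 / 2) y := by
    simpa using ((hasDerivAt_id y).add_const 1).div_const 2
  have hd : HasDerivAt (jacobiMonomial n s) _ y := (hu.pow s).mul (hv.pow (n - s))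
  rw [hd.deriv, jacobiMonomial, jacobiMonomial, ← Nat.sub_sub]
  rcases s with _ | s <;> rcases n - _ with _ | m <;>
    simp only [Nat.cast_zero, Nat.cast_succ, add_tsub_cancel_right, zero_tsub, pow_zero, pow_succ,
      Pi.pow_apply] <;> ring

lemma one_sub_mul_deriv_jacobi (n : ℕ) (a b y : ℝ) :
    (1 - y) * deriv (jacobi n a b) y = ∑ s ∈ range (n + 1), jacobiCoeff n a b s *
      (-(s * jacobiMonomial n s y) - (n - s : ℕ) * jacobiMonomial n (s + 1) y) := by
  have hM := differentiable_jacobiMonomial n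
  rw [jacobi_eq_sum, deriv_fun_sum fun s _ ↦ by fun_prop, mul_sum]
  refine sum_congr rfl fun s _ ↦ ?_
  rw [deriv_const_mul _ (by fun_prop), mul_left_comm, one_sub_mul_deriv_jacobiMonomial]

lemma jacobiCoeff_contiguous {n s : ℕ} (hs : s < n) (a b : ℝ) :
    (a + (s + 1)) * jacobiCoeff n a b (s + 1) + (n - s : ℕ) * jacobiCoeff n a b s
      = (n + a) * jacobiCoeff n (a - 1) (b + 1) (s + 1) := by
  obtain ⟨p, rfl⟩ := Nat.exists_eq_add_of_lt hs
  have h := genChoose_contiguous ((s + p + 1 : ℕ) + a) ((s + p + 1 : ℕ) + b) p s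
  simp only [jacobiCoeff, show s + p + 1 - (s + 1) = p by omega,
    show s + p + 1 - s = p + 1 by omega]
  rw [show ((s + p + 1 : ℕ) : ℝ) + (a - 1) = (s + p + 1 : ℕ) + a - 1 by ring,
    show ((s + p + 1 : ℕ) : ℝ) + (b + 1) = (s + p + 1 : ℕ) + b + 1 by ring]
  push_cast at h ⊢
  linear_combination h

theorem one_sub_mul_deriv_jacobi_sub (n : ℕ) (a b y : ℝ) :
    (1 - y) * deriv (jacobi n a b) y - a * jacobi n a b y
      = -(n + a) * jacobi n (a - 1) (b + 1) y := by
  set M := jacobiMonomial n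
  set c := jacobiCoeff n a b
  set d := jacobiCoeff n (a - 1) (b + 1)
  have hlhs : (1 - y) * deriv (jacobi n a b) y - a * jacobi n a b y
      = ∑ s ∈ range (n + 1), (-(a + s) * c s * M s y + -((n - s : ℕ) * c s * M (s + 1) y)) := by
    rw [one_sub_mul_deriv_jacobi, jacobi_eq_sum, mul_sum, ← sum_sub_distrib]
    exact sum_congr rfl fun s _ ↦ by ring
  rw [hlhs, sum_add_distrib, sum_range_succ' _ n, sum_range_succ _ n, jacobi_eq_sum, mul_sum,
    sum_range_succ' _ n, Nat.sub_self, Nat.cast_zero]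
  have h0 : a * c 0 = (n + a) * d 0 := by
    simp only [c, d, jacobiCoeff, Nat.sub_zero, genChoose_zero, mul_one, ← add_sub_assoc]
    linear_combination sub_mul_genChoose ((n : ℝ) + a) n
  have hs : ∀ s ∈ range n, -(a + (s + 1 : ℕ)) * c (s + 1) * M (s + 1) y
      + -((n - s : ℕ) * c s * M (s + 1) y) = -(n + a) * (d (s + 1) * M (s + 1) y) := by
    intro s hs
    push_cast
    linear_combination (-M (s + 1) y) * jacobiCoeff_contiguous (mem_range.mp hs) a b
  rw [← sum_congr rfl hs, sum_add_distrib]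
  linear_combination (-M 0 y) * h0

lemma jacobi_neg (n : ℕ) (a b y : ℝ) : jacobi n a b (-y) = (-1) ^ n * jacobi n b a y := by
  rw [jacobi, ← sum_range_reflect, jacobi, mul_sum]
  refine sum_congr rfl fun s hs ↦ ?_
  have hsn : s ≤ n := Nat.le_of_lt_succ (mem_range.mp hs)
  rw [add_tsub_cancel_right, Nat.sub_sub_self hsn,
    show (-y - 1) / 2 = -1 * ((y + 1) / 2) by ring, show (-y + 1) / 2 = -1 * ((y - 1) / 2) by ring,
    mul_pow, mul_pow, ← Nat.sub_add_cancel hsn, pow_add, Nat.add_sub_cancel]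
  ring

lemma deriv_jacobi_neg (n : ℕ) (a b y : ℝ) :
    deriv (jacobi n a b) (-y) = -((-1) ^ n * deriv (jacobi n b a) y) := by
  have h : jacobi n a b = fun y ↦ (-1) ^ n * jacobi n b a (-y) := by
    funext y
    rw [← jacobi_neg, neg_neg]
  have := differentiable_jacobi n b a
  rw [h, deriv_const_mul _ (by fun_prop), deriv_comp_neg, neg_neg, mul_neg]

theorem one_add_mul_deriv_jacobi_add (n : ℕ) (a b y : ℝ) :
    (1 + y) * deriv (jacobi n a b) y + b * jacobi n a b y
      = (n + b) * jacobi n (a + 1) (b - 1) y := by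
  have h := one_sub_mul_deriv_jacobi_sub n b a (-y)
  rw [deriv_jacobi_neg, jacobi_neg, jacobi_neg] at h
  refine mul_left_cancel₀ (pow_ne_zero n (neg_ne_zero.mpr one_ne_zero)) ?_
  linear_combination -h

theorem jacobi_mul_jacobi_relation (n : ℕ) (a b y : ℝ) :
    n * (a + b + n + 1) * jacobi n (a - 1) (b + 1) y * jacobi n a b y
      + (b + 1) * (1 - y) * jacobi n (a - 1) (b + 1) y * deriv (jacobi n a b) y
      - a * (1 + y) * jacobi n a b y * deriv (jacobi n (a - 1) (b + 1)) y
      + (1 - y) * (1 + y) * deriv (jacobi n a b) y * deriv (jacobi n (a - 1) (b + 1)) y = 0 := by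
  have hlower := one_sub_mul_deriv_jacobi_sub n a b y
  have hraise := one_add_mul_deriv_jacobi_add n (a - 1) (b + 1) y
  rw [sub_add_cancel, add_sub_cancel_right] at hraise
  linear_combination ((1 - y) * deriv (jacobi n a b) y - a * jacobi n a b y) * hraise
    + (n + (b + 1)) * jacobi n a b y * hlower

lemma deriv_jacobi_cos_two_mul (n : ℕ) (a b x : ℝ) :
    deriv (fun x ↦ jacobi n a b (cos (2 * x))) x
      = -2 * sin (2 * x) * deriv (jacobi n a b) (cos (2 * x)) := by
  have hcos : HasDerivAt (fun x ↦ cos (2 * x)) (-sin (2 * x) * 2) x :=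
    (hasDerivAt_cos (2 * x)).comp x ((hasDerivAt_id x).const_mul 2 |>.congr_deriv (mul_one 2))
  have h : HasDerivAt (fun x ↦ jacobi n a b (cos (2 * x))) _ x :=
    (differentiable_jacobi n a b _).hasDerivAt.comp x hcos
  rw [h.deriv]
  ring

lemma tan_mul_sin_two_mul {x : ℝ} (hx : cos x ≠ 0) : tan x * sin (2 * x) = 1 - cos (2 * x) := by
  rw [sin_two_mul, cos_two_mul]
  linear_combination (2 * sin x) * tan_mul_cos hx + 2 * sin_sq_add_cos_sq x

lemma cot_mul_sin_two_mul {x : ℝ} (hx : sin x ≠ 0) : cot x * sin (2 * x) = 1 + cos (2 * x) := by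
  rw [cot_eq_cos_div_sin, sin_two_mul, cos_two_mul]
  field_simp
  ring

/-- The new Jacobi polynomial relation (cc12TPT) for the extended
trigonometric Darboux–Pöschl–Teller potential. -/
theorem jacobi_trigDPT_compatibility (l : ℕ) (g h : ℝ)
    (ψp ψm : ℝ → ℝ)
    (hψp : ∀ x, ψp x = jacobi l (-g - l - 3/2) (h + l - 1/2) (Real.cos (2 * x)))
    (hψm : ∀ x, ψm x = jacobi l (-g - l - 1/2) (h + l - 3/2) (Real.cos (2 * x))) :
    ∀ x : ℝ, x ∈ Set.Ioo 0 (Real.pi / 2) →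
      -8 * l * (h - g + l - 1) * ψp x * ψm x
        + 2 * (2 * h + 2 * l - 1) * Real.tan x * ψp x * deriv ψm x
        + 2 * (2 * g + 2 * l + 1) * Real.cot x * ψm x * deriv ψp x
        - 2 * deriv ψm x * deriv ψp x = 0 := by
  rintro x ⟨hx0, hx1⟩
  set a : ℝ := -g - l - 1/2
  set b : ℝ := h + l - 3/2
  have hm : ψm = fun x ↦ jacobi l a b (cos (2 * x)) := funext hψm
  have hp : ψp = fun x ↦ jacobi l (a - 1) (b + 1) (cos (2 * x)) := by
    funext x
    rw [hψp]
    congr 1 <;> ring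
  have hcos : cos x ≠ 0 := (cos_pos_of_mem_Ioo ⟨by linarith [pi_pos], hx1⟩).ne'
  have hsin : sin x ≠ 0 := (sin_pos_of_pos_of_lt_pi hx0 (by linarith [pi_pos])).ne'
  rw [hm, hp, deriv_jacobi_cos_two_mul, deriv_jacobi_cos_two_mul]
  set y := cos (2 * x)
  set P := jacobi l (a - 1) (b + 1) y
  set Q := jacobi l a b y
  set P' := deriv (jacobi l (a - 1) (b + 1)) y
  set Q' := deriv (jacobi l a b) y
  linear_combination (-8) * jacobi_mul_jacobi_relation l a b y
    - 4 * (2 * h + 2 * l - 1) * P * Q' * tan_mul_sin_two_mul hcos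
    - 4 * (2 * g + 2 * l + 1) * Q * P' * cot_mul_sin_two_mul hsin
    - 8 * Q' * P' * sin_sq_add_cos_sq (2 * x)
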